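/- arXiv:2210.01623 — 3 statements merged into one kernel-verified Lean document; each statement's English description precedes it below -/
import Mathlib

section
/- For all vectors X, Y, Z, W in ℝ⁷ one has φ₀(A(X,Y), Z, W) + φ₀(Y, A(X,Z), W) + φ₀(Y, Z, A(X,W)) = −3·ψ₀(X, Y, Z, W). (Equivalently, the natural action of the skew endomorphism A_X on φ₀ satisfies A_{X⋆}φ₀ = 3·X⌟ψ₀.) -/
open scoped RealInnerProductSpace

noncomputable section

/-- `ℝ⁷` with its standard inner product. -/
abbrev V7 := EuclideanSpace ℝ (Fin 7)

/-- The standard orthonormal basis vectors of `ℝ⁷`. -/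
def E (i : Fin 7) : V7 := EuclideanSpace.single i 1

/-- `(eⁱ ∧ eʲ ∧ eᵏ)(X,Y,Z)` : the 3×3 determinant of coordinates `i,j,k` of `X,Y,Z`. -/
def triple (i j k : Fin 7) (X Y Z : V7) : ℝ :=
  X i * (Y j * Z k - Y k * Z j) - X j * (Y i * Z k - Y k * Z i) + X k * (Y i * Z j - Y j * Z i)

/-- `(eⁱ ∧ eʲ ∧ eᵏ ∧ eˡ)(X,Y,Z,W)` : the 4×4 determinant of coordinates `i,j,k,l`. -/
def quadruple (i j k l : Fin 7) (X Y Z W : V7) : ℝ :=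
  X i * triple j k l Y Z W - X j * triple i k l Y Z W
    + X k * triple i j l Y Z W - X l * triple i j k Y Z W

/-- The associative 3-form
`φ₀ = e¹²³ + e¹⁷⁶ + e²⁵⁷ + e⁶⁵³ + e¹⁴⁵ + e²⁴⁶ + e³⁴⁷` (indices shifted to `0,…,6`). -/
def phi (X Y Z : V7) : ℝ :=
  triple 0 1 2 X Y Z + triple 0 6 5 X Y Z + triple 1 4 6 X Y Z + triple 5 4 2 X Y Z
    + triple 0 3 4 X Y Z + triple 1 3 5 X Y Z + triple 2 3 6 X Y Z

/-- The coassociative 4-form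
`ψ₀ = e⁴⁵⁶⁷ − e²³⁴⁵ + e¹³⁴⁶ − e¹²⁴⁷ + e²³⁶⁷ + e¹³⁵⁷ + e¹²⁵⁶` (indices shifted to `0,…,6`). -/
def psi (X Y Z W : V7) : ℝ :=
  quadruple 3 4 5 6 X Y Z W - quadruple 1 2 3 4 X Y Z W + quadruple 0 2 3 5 X Y Z W
    - quadruple 0 1 3 6 X Y Z W + quadruple 1 2 5 6 X Y Z W + quadruple 0 2 4 6 X Y Z W
    + quadruple 0 1 4 5 X Y Z W

/-- The cross product `A(Y,Z)`, characterized by `⟨X, A(Y,Z)⟩ = φ₀(X,Y,Z)`. -/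
def cross (Y Z : V7) : V7 := ∑ i, phi (E i) Y Z • E i

/-- The tangent-valued 3-form `χ`, characterized by `(1/2)⟨X, χ(Y,Z,W)⟩ = ψ₀(X,Y,Z,W)`. -/
def chi (Y Z W : V7) : V7 := ∑ i, (2 * psi (E i) Y Z W) • E i

lemma crossC0 (X Y : V7) : cross X Y 0 = (X 1 * Y 2 - X 2 * Y 1) + (X 6 * Y 5 - X 5 * Y 6) + (X 3 * Y 4 - X 4 * Y 3) := by
  rw [cross, WithLp.ofLp_sum, Finset.sum_apply]
  simp [phi, triple, E, EuclideanSpace.single_apply]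

lemma crossC1 (X Y : V7) : cross X Y 1 = -(X 0 * Y 2 - X 2 * Y 0) + (X 4 * Y 6 - X 6 * Y 4) + (X 3 * Y 5 - X 5 * Y 3) := by
  rw [cross, WithLp.ofLp_sum, Finset.sum_apply]
  simp [phi, triple, E, EuclideanSpace.single_apply]

lemma crossC2 (X Y : V7) : cross X Y 2 = (X 0 * Y 1 - X 1 * Y 0) + (X 5 * Y 4 - X 4 * Y 5) + (X 3 * Y 6 - X 6 * Y 3) := by
  rw [cross, WithLp.ofLp_sum, Finset.sum_apply]
  simp [phi, triple, E, EuclideanSpace.single_apply]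

lemma crossC3 (X Y : V7) : cross X Y 3 = -(X 0 * Y 4 - X 4 * Y 0) + -(X 1 * Y 5 - X 5 * Y 1) + -(X 2 * Y 6 - X 6 * Y 2) := by
  rw [cross, WithLp.ofLp_sum, Finset.sum_apply]
  simp [phi, triple, E, EuclideanSpace.single_apply]

lemma crossC4 (X Y : V7) : cross X Y 4 = -(X 1 * Y 6 - X 6 * Y 1) + -(X 5 * Y 2 - X 2 * Y 5) + (X 0 * Y 3 - X 3 * Y 0) := by
  rw [cross, WithLp.ofLp_sum, Finset.sum_apply]
  simp [phi, triple, E, EuclideanSpace.single_apply]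

lemma crossC5 (X Y : V7) : cross X Y 5 = (X 0 * Y 6 - X 6 * Y 0) + (X 4 * Y 2 - X 2 * Y 4) + (X 1 * Y 3 - X 3 * Y 1) := by
  rw [cross, WithLp.ofLp_sum, Finset.sum_apply]
  simp [phi, triple, E, EuclideanSpace.single_apply]

lemma crossC6 (X Y : V7) : cross X Y 6 = -(X 0 * Y 5 - X 5 * Y 0) + (X 1 * Y 4 - X 4 * Y 1) + (X 2 * Y 3 - X 3 * Y 2) := by
  rw [cross, WithLp.ofLp_sum, Finset.sum_apply]
  simp [phi, triple, E, EuclideanSpace.single_apply]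


set_option maxHeartbeats 1000000 in
/-- `φ₀(A(X,Y),Z,W) + φ₀(Y,A(X,Z),W) + φ₀(Y,Z,A(X,W)) = −3·ψ₀(X,Y,Z,W)`,
i.e. `A_{X⋆}φ₀ = 3·X⌟ψ₀`. -/
theorem stmt5 (X Y Z W : V7) :
    phi (cross X Y) Z W + phi Y (cross X Z) W + phi Y Z (cross X W)
      = -3 * psi X Y Z W := by
  simp only [phi, triple, crossC0, crossC1, crossC2, crossC3, crossC4, crossC5, crossC6,
    psi, quadruple]
  ring
end
end

section
/- Let B : ℝ⁷ → ℝ⁷ be a skew-symmetric endomorphism whose associated 2-form w(Y,Z) = ⟨B Y, Z⟩ lies in the 14-dimensional component Λ²₁₄, i.e. Σ_{1≤i<j≤7} w(eᵢ,eⱼ)·φ₀(X,eᵢ,eⱼ) = 0 for every X ∈ ℝ⁷. Then B annihilates φ₀: for all Y, Z, W ∈ ℝ⁷, φ₀(B Y, Z, W) + φ₀(Y, B Z, W) + φ₀(Y, Z, B W) = 0. (Equivalently, w⋆φ₀ = 0 for w ∈ Λ²₁₄; this expresses Λ²₁₄ ≅ 𝔤₂ as the infinitesimal stabilizer of φ₀.)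 -/
/-
Since `⟪X, cross Y Z⟫ = φ₀(X,Y,Z)` and `B` is skew, the left-hand side equals
`⟪Y, cross (B Z) W + cross Z (B W) - B (cross Z W)⟫`, the failure of `B` to be a derivation of the
cross product. A coordinate computation identifies this defect with `½ ∑ₖ cₖ χ(eₖ,Z,W)`, where
`cₖ = ∑_{i<j} w(eᵢ,eⱼ) φ₀(eₖ,eᵢ,eⱼ)` are, up to a constant factor, the coordinates of the
`Λ²₇`-component of `w`; the hypothesis `w ∈ Λ²₁₄` says exactly that they vanish.
-/

open scoped RealInnerProductSpace

noncomputable section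

namespace EuclideanSpace

variable {n : ℕ} (B : EuclideanSpace ℝ (Fin n) →ₗ[ℝ] EuclideanSpace ℝ (Fin n))

theorem linearMap_apply_eq_sum (Y : EuclideanSpace ℝ (Fin n)) (m : Fin n) :
    B Y m = ∑ a, Y a * B (single a 1) m := by
  conv_lhs => rw [← (basisFun (Fin n) ℝ).sum_repr Y]
  simp [map_sum, map_smul]

theorem linearMap_single_apply_antisymm (hskew : ∀ X Y, ⟪B X, Y⟫ = -⟪X, B Y⟫) (i j : Fin n) :
    B (single i 1) j = -B (single j 1) i := by
  simpa [inner_single_right, inner_single_left] using hskew (single i 1) (single j 1)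

end EuclideanSpace

theorem inner_E (x : V7) (m : Fin 7) : ⟪x, E m⟫ = x m := by
  simp [E, EuclideanSpace.inner_single_right]

theorem inner_cross (X Y Z : V7) : ⟪X, cross Y Z⟫ = phi X Y Z := by
  simp only [cross, inner_sum, inner_smul_right, inner_E]
  simp [Fin.sum_univ_seven, phi, triple, E]
  ring

/-- `phiContraction B (E k)` is, up to a constant factor, the `k`-th coordinate of the
`Λ²₇`-component of `w = ⟪B ·, ·⟫`. -/
def phiContraction (B : V7 →ₗ[ℝ] V7) (X : V7) : ℝ :=
  ∑ i : Fin 7, ∑ j : Fin 7, if i < j then ⟪B (E i), E j⟫ * phi X (E i) (E j) else 0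

def crossDefect (B : V7 →ₗ[ℝ] V7) (Z W : V7) : V7 :=
  cross (B Z) W + cross Z (B W) - B (cross Z W)

theorem phi_deriv_eq_inner_crossDefect (B : V7 →ₗ[ℝ] V7)
    (hskew : ∀ X Y : V7, ⟪B X, Y⟫ = -⟪X, B Y⟫) (Y Z W : V7) :
    phi (B Y) Z W + phi Y (B Z) W + phi Y Z (B W) = ⟪Y, crossDefect B Z W⟫ := by
  rw [crossDefect, inner_sub_right, inner_add_right, inner_cross, inner_cross,
    ← inner_cross (B Y)]
  linarith [hskew Y (cross Z W)]

set_option maxHeartbeats 1000000 in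
theorem crossDefect_eq_sum_chi (B : V7 →ₗ[ℝ] V7) (hskew : ∀ X Y : V7, ⟪B X, Y⟫ = -⟪X, B Y⟫)
    (Z W : V7) :
    crossDefect B Z W = (1 / 2 : ℝ) • ∑ k, phiContraction B (E k) • chi (E k) Z W := by
  -- Oriented so that `simp` rewrites every entry below the diagonal, leaving the 21 entries
  -- above it as independent atoms for `ring`.
  have hlower : ∀ i j : Fin 7, j < i →
      B (EuclideanSpace.single i 1) j = -B (EuclideanSpace.single j 1) i :=
    fun i j _ => EuclideanSpace.linearMap_single_apply_antisymm B hskew i j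
  have hdiag : ∀ i : Fin 7, B (EuclideanSpace.single i 1) i = 0 := fun i => by
    linarith [EuclideanSpace.linearMap_single_apply_antisymm B hskew i i]
  ext m
  simp only [crossDefect, cross, chi, phiContraction, PiLp.add_apply, PiLp.sub_apply,
    PiLp.smul_apply, smul_eq_mul, WithLp.ofLp_sum, Finset.sum_apply, map_sum, map_smul, inner_E]
  simp only [E, PiLp.single_apply, mul_ite, mul_one, mul_zero, Finset.sum_ite_eq,
    Finset.mem_univ, if_true]
  simp only [phi, psi, triple, quadruple, EuclideanSpace.linearMap_apply_eq_sum B Z,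
    EuclideanSpace.linearMap_apply_eq_sum B W]
  fin_cases m <;>
  · simp (config := { decide := true }) only [Fin.reduceFinMk, Fin.sum_univ_seven,
      PiLp.single_apply, hdiag]
    simp only [hlower, Fin.reduceLT, ↓reduceIte, one_mul, zero_mul, mul_zero, add_zero, zero_add,
      sub_zero, zero_sub]
    ring

/-- A skew endomorphism whose 2-form lies in `Λ²₁₄` annihilates `φ₀`. -/
theorem stmt7 (B : V7 →ₗ[ℝ] V7)
    (hskew : ∀ X Y : V7, ⟪B X, Y⟫ = -⟪X, B Y⟫)
    (h14 : ∀ X : V7, ∑ i : Fin 7, ∑ j : Fin 7,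
      (if i < j then ⟪B (E i), E j⟫ * phi X (E i) (E j) else 0) = 0) :
    ∀ Y Z W : V7, phi (B Y) Z W + phi Y (B Z) W + phi Y Z (B W) = 0 := by
  intro Y Z W
  have hcomp : ∀ k, phiContraction B (E k) = 0 := fun k => h14 (E k)
  rw [phi_deriv_eq_inner_crossDefect B hskew, crossDefect_eq_sum_chi B hskew]
  simp [hcomp]
end
end

section
/- Let w be an alternating 2-form on ℝ⁷ lying in Λ²₁₄, i.e. Σ_{1≤i<j≤7} w(eᵢ,eⱼ)·φ₀(X,eᵢ,eⱼ) = 0 for every X ∈ ℝ⁷. Then Σ_{i=1}^{7} eᵢ⌟(A_{eᵢ⋆}w) = 0; explicitly, for every Z ∈ ℝ⁷: Σ_{i=1}^{7} w(eᵢ, A(eᵢ, Z)) = 0. -/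
/-!
Expanding `A(eᵢ, Z) = Σⱼ φ₀(eⱼ, eᵢ, Z) eⱼ` and using `φ₀(eⱼ, eᵢ, Z) = -φ₀(Z, eᵢ, eⱼ)` gives
`Σᵢ w(eᵢ, A(eᵢ, Z)) = -Σᵢⱼ w(eᵢ, eⱼ) φ₀(Z, eᵢ, eⱼ)`. The summand is symmetric in `(i, j)`, being a
product of two antisymmetric factors, so the double sum is twice the sum over `i < j`, which
vanishes for `w ∈ Λ²₁₄`.
-/

open scoped RealInnerProductSpace

noncomputable section

open Finset

theorem Finset.sum_sum_eq_two_nsmul_sum_sum_lt {ι M : Type*} [Fintype ι] [LinearOrder ι]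
    [AddCommMonoid M] (g : ι → ι → M) (hg : ∀ i j, g i j = g j i) (hdiag : ∀ i, g i i = 0) :
    ∑ i, ∑ j, g i j = 2 • ∑ i, ∑ j, if i < j then g i j else 0 := by
  have hsplit : ∀ i j, g i j = (if i < j then g i j else 0) + if j < i then g j i else 0 := by
    intro i j
    rcases lt_trichotomy i j with h | rfl | h
    · simp [h, h.not_gt]
    · simp [hdiag]
    · simp [h, h.not_gt, hg i j]
  calc ∑ i, ∑ j, g i j
      = ∑ i, ∑ j, ((if i < j then g i j else 0) + if j < i then g j i else 0) := by
        simp only [← hsplit]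
    _ = 2 • ∑ i, ∑ j, if i < j then g i j else 0 := by
        rw [two_nsmul]
        simp only [sum_add_distrib]
        rw [sum_comm (f := fun i j => if j < i then g j i else 0)]

namespace AlternatingMap

variable {R M N : Type*} [CommSemiring R]

theorem map_vecCons_swap [AddCommGroup M] [Module R M] [AddCommGroup N] [Module R N]
    (w : M [⋀^Fin 2]→ₗ[R] N) (x y : M) : w ![y, x] = -w ![x, y] := by
  have : ![y, x] = ![x, y] ∘ Equiv.swap 0 1 := by
    funext k; fin_cases k <;> rfl
  rw [this, w.map_swap _ zero_ne_one]

theorem map_vecCons_sum_smul [AddCommMonoid M] [Module R M] [AddCommMonoid N] [Module R N]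
    {ι : Type*} (w : M [⋀^Fin 2]→ₗ[R] N) (x : M) (s : Finset ι) (c : ι → R) (v : ι → M) :
    w ![x, ∑ j ∈ s, c j • v j] = ∑ j ∈ s, c j • w ![x, v j] := by
  have hlin : ∀ y, w ![x, y] = w.toMultilinearMap.toLinearMap ![x, x] 1 y := fun y => by
    rw [MultilinearMap.toLinearMap_apply]
    exact congrArg w (by funext k; fin_cases k <;> rfl)
  simp only [hlin, map_sum, map_smul]

end AlternatingMap

theorem phi_rotate (X Y Z : V7) : phi X Y Z = phi Z X Y := by
  unfold phi triple; ring

theorem phi_swap_right (X Y Z : V7) : phi X Z Y = -phi X Y Z := by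
  unfold phi triple; ring

theorem phi_self_right (X Y : V7) : phi X Y Y = 0 := by
  unfold phi triple; ring

/-- For `w ∈ Λ²₁₄`, `Σᵢ eᵢ⌟(A_{eᵢ⋆}w) = 0`: for every `Z`, `Σᵢ w(eᵢ, A(eᵢ,Z)) = 0`. -/
theorem stmt9 (w : AlternatingMap ℝ V7 ℝ (Fin 2))
    (h14 : ∀ X : V7, ∑ i : Fin 7, ∑ j : Fin 7,
      (if i < j then w ![E i, E j] * phi X (E i) (E j) else 0) = 0) :
    ∀ Z : V7, ∑ i : Fin 7, w ![E i, cross (E i) Z] = 0 := by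
  intro Z
  have hsymm := sum_sum_eq_two_nsmul_sum_sum_lt (fun i j => w ![E i, E j] * phi Z (E i) (E j))
    (fun i j => by rw [w.map_vecCons_swap (E i), phi_swap_right Z (E i), neg_mul_neg])
    (fun i => by simp only [phi_self_right, mul_zero])
  calc ∑ i, w ![E i, cross (E i) Z]
      = ∑ i, ∑ j, phi (E j) (E i) Z * w ![E i, E j] := by
        simp only [cross, w.map_vecCons_sum_smul, smul_eq_mul]
    _ = -∑ i, ∑ j, w ![E i, E j] * phi Z (E i) (E j) := by
        simp only [← sum_neg_distrib]
        refine sum_congr rfl fun i _ => sum_congr rfl fun j _ => ?_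
        rw [phi_rotate, phi_swap_right]
        ring
    _ = 0 := by rw [hsymm, h14 Z, smul_zero, neg_zero]
end
end
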